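/- (Proposition: linear convergence of SGD under the norm test) Let F : ℝ^d → ℝ be differentiable with L-Lipschitz gradient and μ-strongly convex with 0 < μ ≤ L, with unique minimizer ξ*. Let (ξ_k)_{k≥0} be a sequence of square-integrable random vectors generated by ξ_{k+1} = ξ_k − η·υ_k with constant step size η = 2/((L+μ)(1+ε²)), where for each k the estimator υ_k is conditionally unbiased, E[υ_k | ℱ_k] = ∇F(ξ_k), and satisfies the norm test E[‖υ_k − ∇F(ξ_k)‖² | ℱ_k] ≤ ε²‖∇F(ξ_k)‖² almost surely, with ℱ_k the σ-algebra generated by ξ_0, …, ξ_k. Then for all k ≥ 0, E[‖ξ_k − ξ*‖²] ≤ ρ^k · E[‖ξ_0 − ξ*‖²], where ρ = (((κ−1)/(κ+1))² + ε²)/(1 + ε²) and κ = L/μ. -/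

import Mathlib

/-!
A `μ`-strongly convex function with `L`-Lipschitz gradient has a coercive gradient,
`μ L ‖x - y‖² + ‖∇F x - ∇F y‖² ≤ (μ + L) ⟪∇F x - ∇F y, x - y⟫`: this is co-coercivity of the
convex, `(L - μ)`-smooth function `F - μ/2 ‖·‖²`. For `η (1 + ε²) (μ + L) = 2` it makes an exact
gradient step contract with room to spare, `‖δ - η ∇F‖² + η² ε² ‖∇F‖² ≤ ρ ‖δ‖²` where
`δ = ξ_k - ξ*`. The stochastic step is the exact one minus `η (υ_k - ∇F(ξ_k))`, a noise of
conditional mean zero, hence orthogonal in `L²` to everything `ℱ_k`-measurable; so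
`E‖ξ_{k+1} - ξ*‖² = E‖δ - η ∇F‖² + η² E‖υ_k - ∇F‖²`, and the norm test bounds the last term by
`η² ε² E‖∇F‖²`.
-/

open MeasureTheory ProbabilityTheory
open scoped RealInnerProductSpace

section Smooth

variable {E : Type*} [NormedAddCommGroup E] [InnerProductSpace ℝ E]

theorem IsLocalMin.hasGradientAt_eq_zero [CompleteSpace E] {f : E → ℝ} {a g : E}
    (h : IsLocalMin f a) (hf : HasGradientAt f g a) : g = 0 :=
  (InnerProductSpace.toDual ℝ E).map_eq_zero_iff.mp (h.hasFDerivAt_eq_zero hf.hasFDerivAt)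

theorem le_add_inner_add_sq_of_lipschitz_gradient [CompleteSpace E] {F : E → ℝ} {g : E → E}
    (hgrad : ∀ x, HasGradientAt F (g x) x) {L : ℝ}
    (hLip : ∀ x y, ‖g x - g y‖ ≤ L * ‖x - y‖) (x y : E) :
    F y ≤ F x + ⟪g x, y - x⟫ + L / 2 * ‖y - x‖ ^ 2 := by
  set u := y - x
  let ψ : ℝ → ℝ := fun t => F (x + t • u) - t * ⟪g x, u⟫ - t ^ 2 * (L / 2 * ‖u‖ ^ 2)
  have hψ : ∀ t : ℝ, HasDerivAt ψ (⟪g (x + t • u) - g x, u⟫ - t * (L * ‖u‖ ^ 2)) t := by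
    intro t
    have hline : HasDerivAt (fun t : ℝ => x + t • u) u t := by
      simpa using ((hasDerivAt_id t).smul_const u).const_add x
    have hF := (hgrad (x + t • u)).hasFDerivAt.comp_hasDerivAt t hline
    have hquad := (hasDerivAt_pow 2 t).mul_const (L / 2 * ‖u‖ ^ 2)
    refine ((hF.sub ((hasDerivAt_id t).mul_const ⟪g x, u⟫)).sub hquad).congr_deriv ?_
    simp only [InnerProductSpace.toDual_apply_apply, inner_sub_left]
    ring
  have hψ_nonpos : ∀ t ∈ interior (Set.Icc (0 : ℝ) 1),
      ⟪g (x + t • u) - g x, u⟫ - t * (L * ‖u‖ ^ 2) ≤ 0 := by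
    intro t ht
    rw [interior_Icc] at ht
    have hgrad_sub : ‖g (x + t • u) - g x‖ ≤ L * (t * ‖u‖) := by
      simpa [norm_smul, abs_of_pos ht.1] using hLip (x + t • u) x
    refine sub_nonpos.mpr ?_
    calc ⟪g (x + t • u) - g x, u⟫ ≤ ‖g (x + t • u) - g x‖ * ‖u‖ := real_inner_le_norm _ _
      _ ≤ L * (t * ‖u‖) * ‖u‖ := by gcongr
      _ = t * (L * ‖u‖ ^ 2) := by ring
  have hanti := antitoneOn_of_hasDerivWithinAt_nonpos (convex_Icc (0 : ℝ) 1)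
    (HasDerivAt.continuousOn fun t _ => hψ t) (fun t _ => (hψ t).hasDerivWithinAt) hψ_nonpos
  have hψ_le := hanti (Set.left_mem_Icc.mpr zero_le_one) (Set.right_mem_Icc.mpr zero_le_one)
    zero_le_one
  have hxu : x + u = y := add_sub_cancel x y
  norm_num [ψ, hxu] at hψ_le
  linarith

theorem mul_norm_sub_sq_le_inner_of_strongConvex {F : E → ℝ} {g : E → E} {μ : ℝ}
    (hsc : ∀ x y, F x + ⟪g x, y - x⟫ + μ / 2 * ‖y - x‖ ^ 2 ≤ F y) (x y : E) :
    μ * ‖x - y‖ ^ 2 ≤ ⟪g x - g y, x - y⟫ := by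
  have hxy := hsc x y
  have hyx := hsc y x
  rw [norm_sub_rev, ← neg_sub x y, inner_neg_right] at hxy
  rw [inner_sub_left]
  linarith

theorem add_inner_add_sq_le_of_convex_of_smooth {G : E → ℝ} {g : E → E} {M : ℝ} (hM : 0 < M)
    (hlow : ∀ x y, G x + ⟪g x, y - x⟫ ≤ G y)
    (hup : ∀ x y, G y ≤ G x + ⟪g x, y - x⟫ + M / 2 * ‖y - x‖ ^ 2) (x y : E) :
    G x + ⟪g x, y - x⟫ + ‖g y - g x‖ ^ 2 / (2 * M) ≤ G y := by
  set w := g y - g x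
  -- compare `G` at `y` and at the gradient step `z` from `y`
  set z := y - M⁻¹ • w
  have hlow' := hlow x z
  have hup' := hup y z
  have hzx : z - x = (y - x) - M⁻¹ • w := by simp only [z]; abel
  have hzy : z - y = -(M⁻¹ • w) := by simp only [z]; abel
  rw [hzx, inner_sub_right, real_inner_smul_right] at hlow'
  rw [hzy, inner_neg_right, real_inner_smul_right, norm_neg, norm_smul, Real.norm_eq_abs,
    abs_of_pos (inv_pos.mpr hM)] at hup'
  have hw : ⟪g y, w⟫ - ⟪g x, w⟫ = ‖w‖ ^ 2 := by
    rw [← inner_sub_left, real_inner_self_eq_norm_sq]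
  have hquad : M / 2 * (M⁻¹ * ‖w‖) ^ 2 = ‖w‖ ^ 2 / (2 * M) := by field_simp
  have hlin : M⁻¹ * ⟪g y, w⟫ - M⁻¹ * ⟪g x, w⟫ = ‖w‖ ^ 2 / (2 * M) + ‖w‖ ^ 2 / (2 * M) := by
    rw [← mul_sub, hw]
    field_simp
    ring
  linarith

theorem norm_sub_sq_le_mul_inner_of_convex_of_smooth {G : E → ℝ} {g : E → E} {M : ℝ}
    (hM : 0 < M) (hlow : ∀ x y, G x + ⟪g x, y - x⟫ ≤ G y)
    (hup : ∀ x y, G y ≤ G x + ⟪g x, y - x⟫ + M / 2 * ‖y - x‖ ^ 2) (x y : E) :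
    ‖g x - g y‖ ^ 2 ≤ M * ⟪g x - g y, x - y⟫ := by
  have hxy := add_inner_add_sq_le_of_convex_of_smooth hM hlow hup x y
  have hyx := add_inner_add_sq_le_of_convex_of_smooth hM hlow hup y x
  rw [norm_sub_rev, ← neg_sub x y, inner_neg_right] at hxy
  have hsum : ‖g x - g y‖ ^ 2 / M ≤ ⟪g x - g y, x - y⟫ := by
    rw [inner_sub_left, show ‖g x - g y‖ ^ 2 / M
      = ‖g x - g y‖ ^ 2 / (2 * M) + ‖g x - g y‖ ^ 2 / (2 * M) by field_simp; ring]
    linarith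
  rwa [div_le_iff₀' hM] at hsum

theorem mul_norm_sub_sq_add_norm_sub_sq_le_inner [CompleteSpace E] {F : E → ℝ} {g : E → E}
    (hgrad : ∀ x, HasGradientAt F (g x) x) {μ L : ℝ} (hμ : 0 < μ) (hμL : μ ≤ L)
    (hLip : ∀ x y, ‖g x - g y‖ ≤ L * ‖x - y‖)
    (hsc : ∀ x y, F x + ⟪g x, y - x⟫ + μ / 2 * ‖y - x‖ ^ 2 ≤ F y) (x y : E) :
    μ * L * ‖x - y‖ ^ 2 + ‖g x - g y‖ ^ 2 ≤ (μ + L) * ⟪g x - g y, x - y⟫ := by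
  rcases hμL.eq_or_lt with rfl | hlt
  · have hmono := mul_norm_sub_sq_le_inner_of_strongConvex hsc x y
    have hLip' : ‖g x - g y‖ ^ 2 ≤ (μ * ‖x - y‖) ^ 2 := by gcongr; exact hLip x y
    nlinarith
  -- `F - μ/2 ‖·‖²` is convex and `(L - μ)`-smooth
  set G : E → ℝ := fun z => F z - μ / 2 * ‖z‖ ^ 2
  set gG : E → E := fun z => g z - μ • z
  have hG : ∀ x y, G y - (G x + ⟪gG x, y - x⟫)
      = F y - (F x + ⟪g x, y - x⟫) - μ / 2 * ‖y - x‖ ^ 2 := by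
    intro x y
    have hy : y = x + (y - x) := (add_sub_cancel x y).symm
    simp only [G, gG, inner_sub_left, real_inner_smul_left]
    conv_lhs => rw [hy, norm_add_sq_real, ← hy]
    ring
  have hcoco := norm_sub_sq_le_mul_inner_of_convex_of_smooth (sub_pos.mpr hlt)
    (G := G) (g := gG) (fun x y => by linarith [hsc x y, hG x y])
    (fun x y => by
      linarith [le_add_inner_add_sq_of_lipschitz_gradient hgrad hLip x y, hG x y]) x y
  have hdiff : gG x - gG y = (g x - g y) - μ • (x - y) := by simp only [gG, smul_sub]; abel
  rw [hdiff, norm_sub_sq_real, real_inner_smul_right, norm_smul, Real.norm_eq_abs, abs_of_pos hμ,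
    inner_sub_left (g x - g y), real_inner_smul_left, real_inner_self_eq_norm_sq] at hcoco
  nlinarith

theorem norm_sub_smul_sq_add_le {δ v : E} {μ L η ε : ℝ} (hη : η * (1 + ε ^ 2) * (μ + L) = 2)
    (h : μ * L * ‖δ‖ ^ 2 + ‖v‖ ^ 2 ≤ (μ + L) * ⟪v, δ⟫) :
    ‖δ - η • v‖ ^ 2 + η ^ 2 * ε ^ 2 * ‖v‖ ^ 2 ≤ (1 - 2 * η * μ * L / (μ + L)) * ‖δ‖ ^ 2 := by
  have hne : μ + L ≠ 0 := fun h0 => by simp [h0] at hη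
  have hs : 2 * η / (μ + L) = η ^ 2 * (1 + ε ^ 2) := by
    field_simp
    linear_combination -η * hη
  have key := mul_le_mul_of_nonneg_left h (hs ▸ by positivity : 0 ≤ 2 * η / (μ + L))
  rw [norm_sub_sq_real, real_inner_smul_right, norm_smul, mul_pow, Real.norm_eq_abs, sq_abs,
    real_inner_comm]
  have hlhs : 2 * η / (μ + L) * (μ * L * ‖δ‖ ^ 2 + ‖v‖ ^ 2)
      = 2 * η * μ * L / (μ + L) * ‖δ‖ ^ 2 + η ^ 2 * (1 + ε ^ 2) * ‖v‖ ^ 2 := by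
    rw [← hs]; ring
  have hrhs : 2 * η / (μ + L) * ((μ + L) * ⟪v, δ⟫) = 2 * η * ⟪v, δ⟫ := by field_simp
  rw [hlhs, hrhs] at key
  linarith

end Smooth

section Probability

variable {Ω : Type*} {m m0 : MeasurableSpace Ω} {P : Measure Ω}
  {E : Type*} [NormedAddCommGroup E]

theorem MeasureTheory.MemLp.integrable_norm_sq {X : Ω → E} (hX : MemLp X 2 P) :
    Integrable (fun ω => ‖X ω‖ ^ 2) P :=
  (memLp_two_iff_integrable_sq_norm hX.1).mp hX

variable [InnerProductSpace ℝ E]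

theorem MeasureTheory.MemLp.integrable_inner {X Y : Ω → E} (hX : MemLp X 2 P) (hY : MemLp Y 2 P) :
    Integrable (fun ω => ⟪X ω, Y ω⟫) P :=
  memLp_one_iff_integrable.1 ((innerSL ℝ).memLp_of_bilin 1 hX hY)

variable [CompleteSpace E] [IsFiniteMeasure P]

theorem integral_inner_eq_zero_of_condExp_eq_zero (hm : m ≤ m0) {X Y : Ω → E}
    (hX : StronglyMeasurable[m] X) (hX2 : MemLp X 2 P) (hY2 : MemLp Y 2 P)
    (hY : P[Y|m] =ᵐ[P] 0) : ∫ ω, ⟪X ω, Y ω⟫ ∂P = 0 := by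
  have hpull : P[fun ω => ⟪X ω, Y ω⟫|m] =ᵐ[P] fun ω => ⟪X ω, P[Y|m] ω⟫ :=
    condExp_bilin_of_stronglyMeasurable_left (innerSL ℝ) hX (hX2.integrable_inner hY2)
      (hY2.integrable one_le_two)
  rw [← integral_condExp hm, integral_congr_ae (hpull.trans _), integral_zero]
  filter_upwards [hY] with ω hω
  simp [hω]

theorem integral_norm_sub_smul_sq_of_condExp_eq_zero (hm : m ≤ m0) {W Y : Ω → E}
    (hW : StronglyMeasurable[m] W) (hW2 : MemLp W 2 P) (hY2 : MemLp Y 2 P)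
    (hY : P[Y|m] =ᵐ[P] 0) (c : ℝ) :
    ∫ ω, ‖W ω - c • Y ω‖ ^ 2 ∂P = ∫ ω, ‖W ω‖ ^ 2 ∂P + c ^ 2 * ∫ ω, ‖Y ω‖ ^ 2 ∂P := by
  have hexpand : ∀ ω, ‖W ω - c • Y ω‖ ^ 2
      = ‖W ω‖ ^ 2 - 2 * c * ⟪W ω, Y ω⟫ + c ^ 2 * ‖Y ω‖ ^ 2 := by
    intro ω
    rw [norm_sub_sq_real, real_inner_smul_right, norm_smul, mul_pow, Real.norm_eq_abs, sq_abs]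
    ring
  have hcross : Integrable (fun ω => 2 * c * ⟪W ω, Y ω⟫) P :=
    (hW2.integrable_inner hY2).const_mul _
  have hfirst : Integrable (fun ω => ‖W ω‖ ^ 2 - 2 * c * ⟪W ω, Y ω⟫) P :=
    hW2.integrable_norm_sq.sub hcross
  simp_rw [hexpand]
  rw [integral_add hfirst (hY2.integrable_norm_sq.const_mul _),
    integral_sub hW2.integrable_norm_sq hcross,
    integral_const_mul, integral_const_mul,
    integral_inner_eq_zero_of_condExp_eq_zero hm hW hW2 hY2 hY]
  ring

theorem integral_le_of_condExp_le (hm : m ≤ m0) {f g : Ω → ℝ} (hg : Integrable g P)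
    (hfg : P[f|m] ≤ᵐ[P] g) : ∫ ω, f ω ∂P ≤ ∫ ω, g ω ∂P := by
  rw [← integral_condExp hm]
  exact integral_mono_ae integrable_condExp hg hfg

theorem integral_norm_sub_smul_sq_le_of_norm_test (hm : m ≤ m0) {X G V : Ω → E} {η ε ρ : ℝ}
    (hX : StronglyMeasurable[m] X) (hG : StronglyMeasurable[m] G)
    (hX2 : MemLp X 2 P) (hG2 : MemLp G 2 P) (hV2 : MemLp V 2 P)
    (hunbiased : P[V|m] =ᵐ[P] G)
    (hnormtest : P[fun ω => ‖V ω - G ω‖ ^ 2|m] ≤ᵐ[P] fun ω => ε ^ 2 * ‖G ω‖ ^ 2)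
    (hstep : ∀ ω, ‖X ω - η • G ω‖ ^ 2 + η ^ 2 * ε ^ 2 * ‖G ω‖ ^ 2 ≤ ρ * ‖X ω‖ ^ 2) :
    ∫ ω, ‖X ω - η • V ω‖ ^ 2 ∂P ≤ ρ * ∫ ω, ‖X ω‖ ^ 2 ∂P := by
  have hG1 : Integrable G P := hG2.integrable one_le_two
  have hcentered : P[V - G|m] =ᵐ[P] 0 := by
    filter_upwards [condExp_sub (hV2.integrable one_le_two) hG1 m, hunbiased] with ω h1 h2
    rw [h1, Pi.sub_apply, h2, condExp_of_stronglyMeasurable hm hG hG1, sub_self, Pi.zero_apply]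
  have hvariance : ∫ ω, ‖V ω - G ω‖ ^ 2 ∂P ≤ ε ^ 2 * ∫ ω, ‖G ω‖ ^ 2 ∂P := by
    rw [← integral_const_mul]
    exact integral_le_of_condExp_le hm (hG2.integrable_norm_sq.const_mul _) hnormtest
  have hsplit : ∀ ω, X ω - η • V ω = (X ω - η • G ω) - η • (V - G) ω := by
    intro ω
    rw [Pi.sub_apply, smul_sub]
    abel
  have hW2 : MemLp (fun ω => X ω - η • G ω) 2 P := hX2.sub (hG2.const_smul η)
  calc ∫ ω, ‖X ω - η • V ω‖ ^ 2 ∂P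
      = ∫ ω, ‖X ω - η • G ω‖ ^ 2 ∂P + η ^ 2 * ∫ ω, ‖V ω - G ω‖ ^ 2 ∂P := by
        simp_rw [hsplit]
        exact integral_norm_sub_smul_sq_of_condExp_eq_zero hm (hX.sub (hG.const_smul η)) hW2
          (hV2.sub hG2) hcentered η
    _ ≤ ∫ ω, ‖X ω - η • G ω‖ ^ 2 ∂P + η ^ 2 * (ε ^ 2 * ∫ ω, ‖G ω‖ ^ 2 ∂P) := by gcongr
    _ = ∫ ω, (‖X ω - η • G ω‖ ^ 2 + η ^ 2 * ε ^ 2 * ‖G ω‖ ^ 2) ∂P := by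
        rw [integral_add hW2.integrable_norm_sq (hG2.integrable_norm_sq.const_mul _),
          integral_const_mul]
        ring
    _ ≤ ∫ ω, ρ * ‖X ω‖ ^ 2 ∂P :=
        integral_mono (hW2.integrable_norm_sq.add (hG2.integrable_norm_sq.const_mul _))
          (hX2.integrable_norm_sq.const_mul _) hstep
    _ = ρ * ∫ ω, ‖X ω‖ ^ 2 ∂P := integral_const_mul _ _

end Probability

theorem sgd_linear_convergence_norm_test_general {d : ℕ} {Ω : Type*} [MeasurableSpace Ω]
    (P : Measure Ω) [IsProbabilityMeasure P]
    (F : EuclideanSpace ℝ (Fin d) → ℝ)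
    (gradF : EuclideanSpace ℝ (Fin d) → EuclideanSpace ℝ (Fin d))
    (hgrad : ∀ x, HasGradientAt F (gradF x) x)
    (L μ : ℝ) (hμ : 0 < μ) (hμL : μ ≤ L)
    (hLip : ∀ x y, ‖gradF x - gradF y‖ ≤ L * ‖x - y‖)
    (hsc : ∀ x y, F y ≥ F x + ⟪gradF x, y - x⟫ + μ / 2 * ‖y - x‖ ^ 2)
    (ξstar : EuclideanSpace ℝ (Fin d)) (hmin : ∀ y, F ξstar ≤ F y)
    (ε : ℝ)
    (η : ℝ) (hη : η = 2 / ((L + μ) * (1 + ε ^ 2)))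
    (ξ υ : ℕ → Ω → EuclideanSpace ℝ (Fin d))
    (hmeasξ : ∀ k, Measurable (ξ k))
    (hsqξ : ∀ k, MemLp (ξ k) 2 P) (hsqυ : ∀ k, MemLp (υ k) 2 P)
    (ℱ : ℕ → MeasurableSpace Ω)
    (hℱ : ∀ k, ℱ k = ⨆ i ∈ Finset.range (k + 1), MeasurableSpace.comap (ξ i) inferInstance)
    (hupdate : ∀ k ω, ξ (k + 1) ω = ξ k ω - η • υ k ω)
    (hunbiased : ∀ k, P[υ k | ℱ k] =ᵐ[P] fun ω => gradF (ξ k ω))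
    (hnormtest : ∀ k,
      P[fun ω => ‖υ k ω - gradF (ξ k ω)‖ ^ 2 | ℱ k] ≤ᵐ[P]
        fun ω => ε ^ 2 * ‖gradF (ξ k ω)‖ ^ 2)
    (κ ρ : ℝ) (hκ : κ = L / μ)
    (hρ : ρ = (((κ - 1) / (κ + 1)) ^ 2 + ε ^ 2) / (1 + ε ^ 2)) :
    ∀ k : ℕ, ∫ ω, ‖ξ k ω - ξstar‖ ^ 2 ∂P ≤ ρ ^ k * ∫ ω, ‖ξ 0 ω - ξstar‖ ^ 2 ∂P := by
  have hL : 0 < L := hμ.trans_le hμL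
  have hg0 : gradF ξstar = 0 :=
    IsLocalMin.hasGradientAt_eq_zero (Filter.Eventually.of_forall hmin) (hgrad ξstar)
  have hηrate : η * (1 + ε ^ 2) * (μ + L) = 2 := by
    rw [hη]
    field_simp
    ring
  have hρrate : ρ = 1 - 2 * η * μ * L / (μ + L) := by
    rw [hρ, hκ, hη]
    field_simp
    ring
  have hstep : ∀ x, ‖(x - ξstar) - η • gradF x‖ ^ 2 + η ^ 2 * ε ^ 2 * ‖gradF x‖ ^ 2
      ≤ ρ * ‖x - ξstar‖ ^ 2 := fun x => hρrate ▸ norm_sub_smul_sq_add_le hηrate (by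
    simpa [hg0] using mul_norm_sub_sq_add_norm_sub_sq_le_inner hgrad hμ hμL hLip hsc x ξstar)
  have hgradF : Continuous gradF :=
    (LipschitzWith.of_dist_le' fun x y => by simpa [dist_eq_norm] using hLip x y).continuous
  have hρ0 : 0 ≤ ρ := by
    rw [hρ]
    positivity
  refine fun n => le_geom (u := fun k => ∫ ω, ‖ξ k ω - ξstar‖ ^ 2 ∂P) hρ0 n fun k _ => ?_
  have hℱk : ℱ k ≤ ‹MeasurableSpace Ω› := hℱ k ▸ iSup₂_le fun i _ => (hmeasξ i).comap_le
  have hξk : Measurable[ℱ k] (ξ k) := measurable_iff_comap_le.mpr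
    (hℱ k ▸ le_iSup₂_of_le k (Finset.self_mem_range_succ k) le_rfl)
  have hX2 : MemLp (fun ω => ξ k ω - ξstar) 2 P := (hsqξ k).sub (memLp_const ξstar)
  have hG2 : MemLp (fun ω => gradF (ξ k ω)) 2 P :=
    hX2.of_le_mul (hgradF.comp_aestronglyMeasurable (hmeasξ k).aestronglyMeasurable)
      (Filter.Eventually.of_forall fun ω => by simpa [hg0] using hLip (ξ k ω) ξstar)
  simp_rw [hupdate, sub_right_comm _ (η • _) ξstar]
  exact integral_norm_sub_smul_sq_le_of_norm_test hℱk (hξk.sub measurable_const).stronglyMeasurable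
    (hgradF.measurable.comp hξk).stronglyMeasurable hX2 hG2 (hsqυ k) (hunbiased k) (hnormtest k)
    fun ω => hstep (ξ k ω)

/-- **Linear convergence of SGD under the norm test.** Let `F : ℝ^d → ℝ`
be differentiable with `L`-Lipschitz gradient and `μ`-strongly convex with `0 < μ ≤ L`,
with unique minimizer `ξ*`. Let `ξ_{k+1} = ξ_k − η•υ_k` with constant step size
`η = 2/((L+μ)(1+ε²))`, where each `υ_k` is conditionally unbiased,
`E[υ_k | ℱ_k] = ∇F(ξ_k)`, and satisfies the norm test
`E[‖υ_k − ∇F(ξ_k)‖² | ℱ_k] ≤ ε²‖∇F(ξ_k)‖²` a.s., with `ℱ_k = σ(ξ_0, …, ξ_k)`. Then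
`E[‖ξ_k − ξ*‖²] ≤ ρ^k E[‖ξ_0 − ξ*‖²]` with `ρ = (((κ−1)/(κ+1))² + ε²)/(1+ε²)`,
`κ = L/μ`. -/
theorem sgd_linear_convergence_norm_test {d : ℕ} {Ω : Type*} [MeasurableSpace Ω]
    (P : Measure Ω) [IsProbabilityMeasure P]
    (F : EuclideanSpace ℝ (Fin d) → ℝ)
    (gradF : EuclideanSpace ℝ (Fin d) → EuclideanSpace ℝ (Fin d))
    (hgrad : ∀ x, HasGradientAt F (gradF x) x)
    (L μ : ℝ) (hμ : 0 < μ) (hμL : μ ≤ L)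
    (hLip : ∀ x y, ‖gradF x - gradF y‖ ≤ L * ‖x - y‖)
    (hsc : ∀ x y, F y ≥ F x + ⟪gradF x, y - x⟫ + μ / 2 * ‖y - x‖ ^ 2)
    (ξstar : EuclideanSpace ℝ (Fin d)) (hmin : ∀ y, F ξstar ≤ F y)
    (ε : ℝ) (hε : 0 < ε)
    (η : ℝ) (hη : η = 2 / ((L + μ) * (1 + ε ^ 2)))
    (ξ υ : ℕ → Ω → EuclideanSpace ℝ (Fin d))
    (hmeasξ : ∀ k, Measurable (ξ k)) (hmeasυ : ∀ k, Measurable (υ k))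
    (hsqξ : ∀ k, MemLp (ξ k) 2 P) (hsqυ : ∀ k, MemLp (υ k) 2 P)
    (ℱ : ℕ → MeasurableSpace Ω)
    (hℱ : ∀ k, ℱ k = ⨆ i ∈ Finset.range (k + 1), MeasurableSpace.comap (ξ i) inferInstance)
    (hupdate : ∀ k ω, ξ (k + 1) ω = ξ k ω - η • υ k ω)
    (hunbiased : ∀ k, P[υ k | ℱ k] =ᵐ[P] fun ω => gradF (ξ k ω))
    (hnormtest : ∀ k,
      P[fun ω => ‖υ k ω - gradF (ξ k ω)‖ ^ 2 | ℱ k] ≤ᵐ[P]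
        fun ω => ε ^ 2 * ‖gradF (ξ k ω)‖ ^ 2)
    (κ ρ : ℝ) (hκ : κ = L / μ)
    (hρ : ρ = (((κ - 1) / (κ + 1)) ^ 2 + ε ^ 2) / (1 + ε ^ 2)) :
    ∀ k : ℕ, ∫ ω, ‖ξ k ω - ξstar‖ ^ 2 ∂P ≤ ρ ^ k * ∫ ω, ‖ξ 0 ω - ξstar‖ ^ 2 ∂P :=
  sgd_linear_convergence_norm_test_general P F gradF hgrad L μ hμ hμL hLip hsc ξstar hmin ε η hη ξ υ
    hmeasξ hsqξ hsqυ ℱ hℱ hupdate hunbiased hnormtest κ ρ hκ hρ
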